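/- arXiv:2211.11223 — 3 statements merged into one kernel-verified Lean document; each statement's English description precedes it below -/
import Mathlib

section
/- Let 0 < β < α < 1 and θ > -β. For every positive integer k, ∑_{j=1}^{k} P^{(k)}_{β/α,0}(j) · Γ(θ/β + j)/(Γ(θ/β + 1)Γ(j)) = Γ(θ/α + k)/(Γ(θ/α + 1)Γ(k)), where P^{(k)}_{σ,0}(j) = (σ^{j-1}Γ(j)/Γ(k)) S_σ(k,j) is the distribution of the number of blocks of a PD(σ,0) partition of [k]. -/
open Finset

/-- Rising factorial (Pochhammer symbol). -/
noncomputable def risingFactorial (x : ℝ) (n : ℕ) : ℝ :=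
  ∏ i ∈ Finset.range n, (x + i)

/-- Generalized Stirling number of the second kind. -/
noncomputable def genStirling (σ : ℝ) (n k : ℕ) : ℝ :=
  (1 / (σ ^ k * (Nat.factorial k : ℝ))) *
    ∑ j ∈ Finset.Icc 1 k, (-1 : ℝ) ^ j * (Nat.choose k j : ℝ) *
      risingFactorial (-(j * σ)) n

/-- `P^{(k)}_{σ,0}(j)`: distribution of the number of blocks of a `PD(σ,0)`
partition of `[k]`. -/
noncomputable def numBlocksPD (σ : ℝ) (k j : ℕ) : ℝ :=
  σ ^ (j - 1) * Real.Gamma j * genStirling σ k j / Real.Gamma k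

/-! With `σ = β/α` and `x = θ/β`, every Gamma ratio is a rising factorial,
`Γ(x + j) / (Γ(x + 1) Γ(j)) = (x + 1)^{(j-1)} / (j-1)!`, and after multiplying through by `σ x`
the identity says `(σ x)^{(k)} = ∑ⱼ σ^j S_σ(k, j) x^{(j)}`: the numbers `σ^j S_σ(k, j)` are the
coefficients of the polynomial `(σ X)^{(k)}` in the rising-factorial basis. Newton's
interpolation formula at the nodes `0, -1, -2, …` gives these coefficients as
`(1/j!) ∑ᵢ (-1)^i C(j, i) (-iσ)^{(k)}`, which is the definition of `S_σ(k, j)`. -/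

open Polynomial
open scoped Nat fwdDiff

theorem risingFactorial_eq_eval_ascPochhammer (x : ℝ) (n : ℕ) :
    risingFactorial x n = (ascPochhammer ℝ n).eval x := by
  induction n with
  | zero => simp [risingFactorial]
  | succ n ih =>
    rw [risingFactorial, prod_range_succ, ← risingFactorial, ih, ascPochhammer_succ_eval]

theorem Real.Gamma_add_nat_eq_eval_ascPochhammer_mul {x : ℝ} (hx : ∀ m : ℕ, x ≠ -m) (n : ℕ) :
    Real.Gamma (x + n) = (ascPochhammer ℝ n).eval x * Real.Gamma x := by
  induction n with
  | zero => simp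
  | succ n ih =>
    have hxn : x + n ≠ 0 := fun h => hx n (eq_neg_of_add_eq_zero_left h)
    rw [Nat.cast_succ, ← add_assoc, Real.Gamma_add_one hxn, ih, ascPochhammer_succ_eval]
    ring

theorem Real.Gamma_natCast_eq_factorial_sub_one {n : ℕ} (hn : 1 ≤ n) :
    Real.Gamma n = (n - 1)! := by
  obtain ⟨m, rfl⟩ := Nat.exists_eq_add_of_le' hn
  rw [Nat.cast_succ, Real.Gamma_nat_eq_factorial, Nat.add_sub_cancel]

theorem Real.Gamma_add_div_Gamma_add_one_mul_Gamma {x : ℝ} (hx : ∀ m : ℕ, x + 1 ≠ -m) {j : ℕ}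
    (hj : 1 ≤ j) :
    Real.Gamma (x + j) / (Real.Gamma (x + 1) * Real.Gamma j)
      = (ascPochhammer ℝ (j - 1)).eval (x + 1) / (j - 1)! := by
  obtain ⟨n, rfl⟩ := Nat.exists_eq_add_of_le' hj
  have hΓ : Real.Gamma (x + 1) ≠ 0 := Real.Gamma_ne_zero hx
  rw [show x + ((n + 1 : ℕ) : ℝ) = x + 1 + n by push_cast; ring, Nat.cast_succ,
    Real.Gamma_nat_eq_factorial, Real.Gamma_add_nat_eq_eval_ascPochhammer_mul hx,
    Nat.add_sub_cancel]
  field_simp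

namespace Polynomial

variable {R K : Type*} [CommRing R] [Field K] [CharZero K]

theorem fwdDiff_iter_eval_neg_zero (P : R[X]) (j : ℕ) :
    (Δ_[1])^[j] (fun t => P.eval (-t)) 0
      = (-1) ^ j * ∑ i ∈ range (j + 1), (-1) ^ i * (j.choose i : R) * P.eval (-(i : R)) := by
  rw [fwdDiff_iter_eq_sum_shift, mul_sum]
  refine sum_congr rfl fun i hi => ?_
  have hij : i ≤ j := Nat.lt_succ_iff.mp (mem_range.mp hi)
  have hsign : (-1 : R) ^ (j - i) = (-1) ^ j * (-1) ^ i := by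
    rw [← pow_sub_mul_pow (-1 : R) hij, mul_assoc, ← mul_pow]
    simp
  simp only [zsmul_eq_mul, Int.cast_mul, Int.cast_pow, Int.cast_neg, Int.cast_one,
    Int.cast_natCast, nsmul_eq_mul, mul_one, zero_add, hsign]
  ring

theorem eval_neg_natCast_eq_sum_fwdDiff_iter (P : R[X]) {n : ℕ} (hP : P.natDegree ≤ n) (m : ℕ) :
    P.eval (-(m : R))
      = ∑ j ∈ range (n + 1), (m.choose j : R) * (Δ_[1])^[j] (fun t => P.eval (-t)) 0 := by
  have hvanish : ∀ j, n < j → (Δ_[1])^[j] (fun t => P.eval (-t)) = 0 := fun j hj => by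
    have : (fun t => P.eval (-t)) = (P.comp (-X)).eval := by ext t; simp
    rw [this]
    refine fwdDiff_iter_eq_zero_of_degree_lt (lt_of_le_of_lt ?_ (hP.trans_lt hj))
    calc (P.comp (-X)).natDegree ≤ P.natDegree * (-X : R[X]).natDegree := natDegree_comp_le
      _ ≤ P.natDegree := mul_le_of_le_one_right' (by rw [natDegree_neg]; exact natDegree_X_le)
  have hNewton := shift_eq_sum_fwdDiff_iter 1 (fun t => P.eval (-t)) m 0
  simp only [zero_add, nsmul_eq_mul, mul_one] at hNewton
  rw [hNewton]
  calc _ = ∑ j ∈ range (n + m + 1), (m.choose j : R) * (Δ_[1])^[j] (fun t => P.eval (-t)) 0 :=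
        sum_subset (range_subset_range.mpr (by omega)) fun j _ hj => by
          rw [Nat.choose_eq_zero_of_lt (by simpa using hj), Nat.cast_zero, zero_mul]
    _ = _ := (sum_subset (range_subset_range.mpr (by omega)) fun j _ hj => by
          rw [hvanish j (by simpa using hj), Pi.zero_apply, mul_zero]).symm

/-- Since `(-m)^{(j)} = (-1)^j j! C(m, j)`, evaluating at `-m` turns this into the Gregory–Newton
formula for `t ↦ P(-t)`. -/
theorem eq_sum_ascPochhammer_of_natDegree_le (P : K[X]) {n : ℕ} (hP : P.natDegree ≤ n) :
    P = ∑ j ∈ range (n + 1),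
      C ((∑ i ∈ range (j + 1), (-1) ^ i * (j.choose i : K) * P.eval (-(i : K))) / j !) *
        ascPochhammer K j := by
  refine eq_of_infinite_eval_eq _ _ <| Set.infinite_of_injective_forall_mem
    (f := fun m : ℕ => -(m : K)) (fun a b hab => by simpa using hab) fun m => ?_
  simp only [Set.mem_ofPred_eq, eval_finsetSum, eval_mul, eval_C]
  rw [eval_neg_natCast_eq_sum_fwdDiff_iter P hP m]
  refine sum_congr rfl fun j _ => ?_
  rw [fwdDiff_iter_eval_neg_zero, ascPochhammer_eval_neg_eq_descPochhammer,
    descPochhammer_eval_eq_descFactorial, Nat.descFactorial_eq_factorial_mul_choose]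
  push_cast
  rw [div_mul_eq_mul_div, eq_div_iff (Nat.cast_ne_zero.mpr j.factorial_ne_zero)]
  ring

end Polynomial

theorem Finset.sum_range_succ_eq_sum_Icc_one {M : Type*} [AddCommMonoid M] {f : ℕ → M}
    (hf : f 0 = 0) (n : ℕ) : ∑ i ∈ range (n + 1), f i = ∑ i ∈ Icc 1 n, f i := by
  rw [Nat.range_succ_eq_Icc_zero, ← insert_Icc_add_one_left_eq_Icc n.zero_le, zero_add,
    sum_insert (by simp), hf, zero_add]

theorem sum_pow_mul_genStirling_mul_ascPochhammer {σ : ℝ} (hσ : σ ≠ 0) {k : ℕ} (hk : 1 ≤ k) :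
    ∑ j ∈ Icc 1 k, C (σ ^ j * genStirling σ k j) * ascPochhammer ℝ j
      = (ascPochhammer ℝ k).comp (C σ * X) := by
  set P := (ascPochhammer ℝ k).comp (C σ * X)
  have hdeg : P.natDegree ≤ k := by
    calc P.natDegree ≤ (ascPochhammer ℝ k).natDegree * (C σ * X).natDegree := natDegree_comp_le
      _ ≤ k := by
        rw [ascPochhammer_natDegree]
        exact mul_le_of_le_one_right' ((natDegree_C_mul_le σ X).trans natDegree_X_le)
  have hP : ∀ i : ℕ, P.eval (-(i : ℝ)) = risingFactorial (-(i * σ)) k := fun i => by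
    rw [eval_comp, eval_mul, eval_C, eval_X, risingFactorial_eq_eval_ascPochhammer, mul_neg,
      mul_comm]
  have hP0 : P.eval 0 = 0 := by
    simp [P, eval_comp, Nat.one_le_iff_ne_zero.mp hk]
  conv_rhs => rw [eq_sum_ascPochhammer_of_natDegree_le P hdeg]
  rw [Finset.sum_range_succ_eq_sum_Icc_one (by simp [hP0])]
  refine sum_congr rfl fun j _ => ?_
  rw [Finset.sum_range_succ_eq_sum_Icc_one (by simp [hP0]), genStirling]
  simp only [hP]
  congr 1
  rw [← mul_assoc, mul_one_div, div_mul_eq_mul_div, mul_div_mul_left _ _ (pow_ne_zero j hσ)]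

theorem sum_pow_mul_genStirling_mul_eval_ascPochhammer_add_one {σ : ℝ} (hσ : σ ≠ 0) {k : ℕ}
    (hk : 1 ≤ k) (x : ℝ) :
    ∑ j ∈ Icc 1 k, σ ^ (j - 1) * genStirling σ k j * (ascPochhammer ℝ (j - 1)).eval (x + 1)
      = (ascPochhammer ℝ (k - 1)).eval (σ * x + 1) := by
  have hterm : ∀ j ∈ Icc 1 k, C (σ ^ j * genStirling σ k j) * ascPochhammer ℝ j
      = C σ * X *
          (C (σ ^ (j - 1) * genStirling σ k j) * (ascPochhammer ℝ (j - 1)).comp (X + 1)) := by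
    intro j hj
    obtain ⟨n, rfl⟩ := Nat.exists_eq_add_of_le' (mem_Icc.mp hj).1
    rw [ascPochhammer_succ_left, Nat.add_sub_cancel, pow_succ, C_mul, C_mul, C_mul]
    ring
  have hrhs : (ascPochhammer ℝ k).comp (C σ * X)
      = C σ * X * (ascPochhammer ℝ (k - 1)).comp (C σ * X + 1) := by
    obtain ⟨n, rfl⟩ := Nat.exists_eq_add_of_le' hk
    rw [ascPochhammer_succ_left, Nat.add_sub_cancel, mul_comp, X_comp, comp_assoc, add_comp,
      X_comp, one_comp]
  have key := sum_pow_mul_genStirling_mul_ascPochhammer hσ hk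
  rw [sum_congr rfl hterm, ← mul_sum, hrhs] at key
  have hcancel := mul_left_cancel₀ (mul_ne_zero (C_ne_zero.mpr hσ) X_ne_zero) key
  simpa [eval_finsetSum, eval_comp] using congrArg (eval x) hcancel

theorem frag_EPPF_consistency_general (α β θ : ℝ) (hβ : 0 < β) (hβα : β < α)
    (hθ : -β < θ) (k : ℕ) (hk : 1 ≤ k) :
    ∑ j ∈ Finset.Icc 1 k,
        numBlocksPD (β / α) k j *
          (Real.Gamma (θ / β + j) / (Real.Gamma (θ / β + 1) * Real.Gamma j))
      = Real.Gamma (θ / α + k) / (Real.Gamma (θ / α + 1) * Real.Gamma k) := by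
  have hα : 0 < α := hβ.trans hβα
  have hσ : β / α ≠ 0 := (div_pos hβ hα).ne'
  have hx : ∀ m : ℕ, θ / β + 1 ≠ -m := fun m h => by
    have : -1 < θ / β := by rw [lt_div_iff₀ hβ]; linarith
    linarith [m.cast_nonneg (α := ℝ)]
  have hy : ∀ m : ℕ, θ / α + 1 ≠ -m := fun m h => by
    have : -1 < θ / α := by rw [lt_div_iff₀ hα]; linarith
    linarith [m.cast_nonneg (α := ℝ)]
  have hσx : β / α * (θ / β) = θ / α := by field_simp
  calc _ = ∑ j ∈ Icc 1 k, (β / α) ^ (j - 1) * genStirling (β / α) k j *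
          (ascPochhammer ℝ (j - 1)).eval (θ / β + 1) / (k - 1)! :=
        sum_congr rfl fun j hj => by
          have hj := (mem_Icc.mp hj).1
          rw [numBlocksPD, Real.Gamma_add_div_Gamma_add_one_mul_Gamma hx hj,
            Real.Gamma_natCast_eq_factorial_sub_one hj, Real.Gamma_natCast_eq_factorial_sub_one hk]
          field_simp
    _ = _ := by
      rw [← sum_div, sum_pow_mul_genStirling_mul_eval_ascPochhammer_add_one hσ hk, hσx,
        Real.Gamma_add_div_Gamma_add_one_mul_Gamma hy hk]

theorem frag_EPPF_consistency (α β θ : ℝ) (hβ : 0 < β) (hβα : β < α) (hα : α < 1)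
    (hθ : -β < θ) (k : ℕ) (hk : 1 ≤ k) :
    ∑ j ∈ Finset.Icc 1 k,
        numBlocksPD (β / α) k j *
          (Real.Gamma (θ / β + j) / (Real.Gamma (θ / β + 1) * Real.Gamma j))
      = Real.Gamma (θ / α + k) / (Real.Gamma (θ / α + 1) * Real.Gamma k) :=
  frag_EPPF_consistency_general α β θ hβ hβα hθ k hk
end

section
/- For 0 < β < α < 1 with β/α = 1/2, the distribution of the number of blocks of a PD(1/2,0) partition of [k] is given explicitly by P^{(k)}_{1/2,0}(j) = C(2k-j-1, k-1) · 2^{j+1-2k} for 1 ≤ j ≤ k, and consequently ∑_{j=1}^{k} C(2k-j-1, k-1) 2^{j+1-2k} = 1. -/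
open Finset

lemma rF_succ (x : ℝ) (n : ℕ) : risingFactorial x (n+1) = risingFactorial x n * (x + n) :=
  Finset.prod_range_succ _ _

lemma rF_one (x : ℝ) : risingFactorial x 1 = x := by
  simp [risingFactorial]

lemma rF_zero_arg (n : ℕ) (hn : 1 ≤ n) : risingFactorial 0 n = 0 := by
  unfold risingFactorial
  apply Finset.prod_eq_zero (i := 0) (Finset.mem_range.2 (by omega))
  simp

lemma sum_Icc_one (f : ℕ → ℝ) (k : ℕ) : ∑ j ∈ Icc 1 k, f j = ∑ i ∈ range k, f (i+1) := by
  induction k with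
  | zero => simp
  | succ n ih => rw [Finset.sum_range_succ, ← ih, Finset.sum_Icc_succ_top (by omega)]

noncomputable def Tsum (σ : ℝ) (n k : ℕ) : ℝ :=
  ∑ j ∈ Finset.range (k+1), (-1 : ℝ) ^ j * (Nat.choose k j : ℝ) * risingFactorial (-(j * σ)) n

lemma genStirling_eq_T (σ : ℝ) (n k : ℕ) (hn : 1 ≤ n) :
    genStirling σ n k = (1 / (σ ^ k * (Nat.factorial k : ℝ))) * Tsum σ n k := by
  unfold genStirling Tsum
  congr 1
  rw [sum_Icc_one, Finset.sum_range_succ']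
  simp [rF_zero_arg n hn]

lemma T_rec (σ : ℝ) (n k : ℕ) :
    Tsum σ (n+1) (k+1)
      = ((n : ℝ) - ((k : ℝ) + 1) * σ) * Tsum σ n (k+1)
        + ((k : ℝ) + 1) * σ * Tsum σ n k := by
  have key : ∀ j ∈ Finset.range (k+2),
      (-1 : ℝ) ^ j * (Nat.choose (k+1) j : ℝ) * risingFactorial (-(j * σ)) (n+1)
        = ((n : ℝ) - ((k : ℝ) + 1) * σ) *
            ((-1 : ℝ) ^ j * (Nat.choose (k+1) j : ℝ) * risingFactorial (-(j * σ)) n)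
          + ((k : ℝ) + 1) * σ *
            ((-1 : ℝ) ^ j * (Nat.choose k j : ℝ) * risingFactorial (-(j * σ)) n) := by
    intro j hj
    have hj' : j ≤ k + 1 := by simpa [Nat.lt_succ_iff] using Finset.mem_range.1 hj
    have h1 : (Nat.choose k j : ℝ) * ((k : ℝ) + 1)
        = (Nat.choose (k+1) j : ℝ) * ((k : ℝ) + 1 - j) := by
      have h := Nat.choose_mul_succ_eq k j
      have hc : ((k + 1 - j : ℕ) : ℝ) = (k : ℝ) + 1 - j := by
        push_cast [Nat.cast_sub hj']; ring
      calc (Nat.choose k j : ℝ) * ((k : ℝ) + 1)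
          = ((Nat.choose k j * (k+1) : ℕ) : ℝ) := by push_cast; ring
        _ = ((Nat.choose (k+1) j * (k + 1 - j) : ℕ) : ℝ) := by rw [h]
        _ = (Nat.choose (k+1) j : ℝ) * ((k : ℝ) + 1 - j) := by push_cast [hc]; ring
    rw [rF_succ]
    linear_combination (-((-1 : ℝ) ^ j * risingFactorial (-(j * σ)) n * σ)) * h1
  unfold Tsum
  rw [Finset.sum_congr rfl key, Finset.sum_add_distrib, ← Finset.mul_sum, ← Finset.mul_sum]
  congr 1
  congr 1
  rw [Finset.sum_range_succ]
  simp [Nat.choose_succ_self]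

lemma genStirling_rec (σ : ℝ) (hσ : σ ≠ 0) (n k : ℕ) (hn : 1 ≤ n) :
    genStirling σ (n+1) (k+1)
      = genStirling σ n k + ((n : ℝ) - ((k : ℝ) + 1) * σ) * genStirling σ n (k+1) := by
  rw [genStirling_eq_T σ (n+1) (k+1) (by omega), genStirling_eq_T σ n k hn,
    genStirling_eq_T σ n (k+1) hn, T_rec]
  have h1 : (σ : ℝ) ^ (k+1) ≠ 0 := pow_ne_zero _ hσ
  have h2 : ((Nat.factorial (k+1) : ℝ)) ≠ 0 := Nat.cast_ne_zero.2 (Nat.factorial_ne_zero _)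
  have h3 : (σ : ℝ) ^ k ≠ 0 := pow_ne_zero _ hσ
  have h4 : ((Nat.factorial k : ℝ)) ≠ 0 := Nat.cast_ne_zero.2 (Nat.factorial_ne_zero _)
  have h5 : ((Nat.factorial (k+1) : ℝ)) = ((k : ℝ) + 1) * (Nat.factorial k : ℝ) := by
    push_cast [Nat.factorial_succ]; ring
  rw [h5]
  field_simp
  ring

noncomputable def Bfun (k j : ℕ) : ℝ :=
  if 1 ≤ j ∧ j ≤ k then
    (Nat.choose (2*k - j - 1) (k-1) : ℝ) * (2 : ℝ) ^ (2*(j : ℤ) - 2*(k : ℤ)) *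
      (Nat.factorial (k-1) : ℝ) / (Nat.factorial (j-1) : ℝ)
  else 0


lemma zpow_split (m : ℤ) (c : ℕ) : (2:ℝ) ^ (m - c) = (2:ℝ) ^ m / 2 ^ c := by
  rw [zpow_sub₀ (by norm_num : (2:ℝ) ≠ 0), zpow_natCast]

lemma B_rec (k j : ℕ) (hk : 1 ≤ k) :
    Bfun (k+1) (j+1) = Bfun k j + ((k : ℝ) - ((j : ℝ) + 1) * (1/2)) * Bfun k (j+1) := by
  rcases Nat.lt_or_ge k (j+1) with hjk | hjk
  · -- j ≥ k : two subcases j = k and j > k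
    rcases Nat.lt_or_ge k j with hjk2 | hjk2
    · -- j > k : everything vanishes
      rw [Bfun, if_neg (by omega), Bfun, if_neg (by omega), Bfun, if_neg (by omega)]
      ring
    · -- j = k
      have hjk3 : j = k := by omega
      subst hjk3
      rw [Bfun, if_pos (by omega), Bfun, if_pos (by omega), Bfun, if_neg (by omega)]
      have e1 : 2*(j+1) - (j+1) - 1 = j := by omega
      have e2 : 2*j - j - 1 = j - 1 := by omega
      have e3 : 2*((j:ℤ)+1) - 2*((j:ℤ)+1) = 0 := by ring
      have e4 : 2*(j:ℤ) - 2*(j:ℤ) = 0 := by ring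
      rw [e1, e2, Nat.add_sub_cancel]
      push_cast [e3, e4]
      have h4 : ((Nat.factorial j : ℝ)) ≠ 0 := Nat.cast_ne_zero.2 (Nat.factorial_ne_zero _)
      have h5 : ((Nat.factorial (j-1) : ℝ)) ≠ 0 := Nat.cast_ne_zero.2 (Nat.factorial_ne_zero _)
      simp [Nat.choose_self]
      field_simp
  · rcases Nat.lt_or_ge j 1 with hj | hj
    · -- j = 0
      have hj0 : j = 0 := by omega
      subst hj0
      obtain ⟨t, rfl⟩ := Nat.exists_eq_add_of_le hk  -- k = 1 + t
      rw [Bfun, if_pos (by omega), Bfun, if_neg (by omega), Bfun, if_pos (by omega)]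
      have e1 : 2*(1+t+1) - 1 - 1 = 2*t + 2 := by omega
      have e2 : 1 + t + 1 - 1 = t + 1 := by omega
      have e3 : 2*(1+t) - 1 - 1 = 2*t := by omega
      have e4 : 1 + t - 1 = t := by omega
      rw [e1, e2, e3, e4]
      have c1 : (Nat.choose (2*t+2) (t+1) : ℝ)
          = (Nat.factorial (2*t+2) : ℝ) / ((Nat.factorial (t+1) : ℝ) * (Nat.factorial (t+1) : ℝ)) := by
        rw [Nat.cast_choose ℝ (by omega), show (2*t+2) - (t+1) = t+1 from by omega]
      have c2 : (Nat.choose (2*t) t : ℝ)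
          = (Nat.factorial (2*t) : ℝ) / ((Nat.factorial t : ℝ) * (Nat.factorial t : ℝ)) := by
        rw [Nat.cast_choose ℝ (by omega), show (2*t) - t = t from by omega]
      have p1 : (2:ℝ) ^ (2*((0+1:ℕ):ℤ) - 2*((1+t+1:ℕ):ℤ)) = (2:ℝ)^(-2*(t:ℤ)) / 4 := by
        have : (2*((0+1:ℕ):ℤ) - 2*((1+t+1:ℕ):ℤ)) = (-2*(t:ℤ)) - (2:ℕ) := by push_cast; ring
        rw [this, zpow_split]
        norm_num
      have p2 : (2:ℝ) ^ (2*((0+1:ℕ):ℤ) - 2*((1+t:ℕ):ℤ)) = (2:ℝ)^(-2*(t:ℤ)) := by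
        congr 1
        push_cast; ring
      rw [p1, p2, c1, c2]
      have hE : (2:ℝ)^(-2*(t:ℤ)) ≠ 0 := zpow_ne_zero _ (by norm_num)
      have f1 : (Nat.factorial (2*t+2) : ℝ) = ((2*t+2 : ℕ) : ℝ) * ((2*t+1 : ℕ) : ℝ) * (Nat.factorial (2*t) : ℝ) := by
        push_cast [show 2*t+2 = (2*t+1)+1 by omega, Nat.factorial_succ]
        ring
      have f2 : (Nat.factorial (t+1) : ℝ) = ((t:ℝ)+1) * (Nat.factorial t : ℝ) := by
        push_cast [Nat.factorial_succ]; ring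
      have h4 : ((Nat.factorial t : ℝ)) ≠ 0 := Nat.cast_ne_zero.2 (Nat.factorial_ne_zero _)
      have h5 : ((Nat.factorial (2*t) : ℝ)) ≠ 0 := Nat.cast_ne_zero.2 (Nat.factorial_ne_zero _)
      rw [f1, f2, Nat.factorial_zero]
      push_cast
      field_simp
      ring
    · -- 1 ≤ j, j + 1 ≤ k : main case
      obtain ⟨a, rfl⟩ := Nat.exists_eq_add_of_le hj   -- j = 1 + a
      obtain ⟨t, rfl⟩ := Nat.exists_eq_add_of_le hjk  -- k = (1+a+1) + t
      rw [Bfun, if_pos (by omega), Bfun, if_pos (by omega), Bfun, if_pos (by omega)]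
      have e1 : 2*(1+a+1+t+1) - (1+a+1) - 1 = a + 2*t + 3 := by omega
      have e2 : 1+a+1+t+1 - 1 = a+t+2 := by omega
      have e3 : 2*(1+a+1+t) - (1+a) - 1 = a + 2*t + 2 := by omega
      have e4 : 1+a+1+t - 1 = a+t+1 := by omega
      have e5 : 2*(1+a+1+t) - (1+a+1) - 1 = a + 2*t + 1 := by omega
      have e6 : 1+a+1 - 1 = a+1 := by omega
      have e7 : 1+a - 1 = a := by omega
      rw [e1, e2, e3, e4, e5, e6, e7]
      have c1 : (Nat.choose (a+2*t+3) (a+t+2) : ℝ)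
          = (Nat.factorial (a+2*t+3) : ℝ) / ((Nat.factorial (a+t+2) : ℝ) * (Nat.factorial (t+1) : ℝ)) := by
        rw [Nat.cast_choose ℝ (by omega), show (a+2*t+3) - (a+t+2) = t+1 from by omega]
      have c2 : (Nat.choose (a+2*t+2) (a+t+1) : ℝ)
          = (Nat.factorial (a+2*t+2) : ℝ) / ((Nat.factorial (a+t+1) : ℝ) * (Nat.factorial (t+1) : ℝ)) := by
        rw [Nat.cast_choose ℝ (by omega), show (a+2*t+2) - (a+t+1) = t+1 from by omega]
      have c3 : (Nat.choose (a+2*t+1) (a+t+1) : ℝ)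
          = (Nat.factorial (a+2*t+1) : ℝ) / ((Nat.factorial (a+t+1) : ℝ) * (Nat.factorial t : ℝ)) := by
        rw [Nat.cast_choose ℝ (by omega), show (a+2*t+1) - (a+t+1) = t from by omega]
      have p1 : (2:ℝ) ^ (2*((1+a+1:ℕ):ℤ) - 2*((1+a+1+t+1:ℕ):ℤ)) = (2:ℝ)^(-2*(t:ℤ)) / 4 := by
        have : (2*((1+a+1:ℕ):ℤ) - 2*((1+a+1+t+1:ℕ):ℤ)) = (-2*(t:ℤ)) - (2:ℕ) := by push_cast; ring
        rw [this, zpow_split]; norm_num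
      have p2 : (2:ℝ) ^ (2*((1+a:ℕ):ℤ) - 2*((1+a+1+t:ℕ):ℤ)) = (2:ℝ)^(-2*(t:ℤ)) / 4 := by
        have : (2*((1+a:ℕ):ℤ) - 2*((1+a+1+t:ℕ):ℤ)) = (-2*(t:ℤ)) - (2:ℕ) := by push_cast; ring
        rw [this, zpow_split]; norm_num
      have p3 : (2:ℝ) ^ (2*((1+a+1:ℕ):ℤ) - 2*((1+a+1+t:ℕ):ℤ)) = (2:ℝ)^(-2*(t:ℤ)) := by
        congr 1; push_cast; ring
      rw [c1, c2, c3, p1, p2, p3]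
      have hE : (2:ℝ)^(-2*(t:ℤ)) ≠ 0 := zpow_ne_zero _ (by norm_num)
      have f1 : (Nat.factorial (a+2*t+3) : ℝ) = ((a:ℝ)+2*t+3) * (Nat.factorial (a+2*t+2) : ℝ) := by
        push_cast [show a+2*t+3 = (a+2*t+2)+1 by omega, Nat.factorial_succ]; ring
      have f2 : (Nat.factorial (a+2*t+2) : ℝ) = ((a:ℝ)+2*t+2) * (Nat.factorial (a+2*t+1) : ℝ) := by
        push_cast [show a+2*t+2 = (a+2*t+1)+1 by omega, Nat.factorial_succ]; ring
      have f3 : (Nat.factorial (a+t+2) : ℝ) = ((a:ℝ)+t+2) * (Nat.factorial (a+t+1) : ℝ) := by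
        push_cast [show a+t+2 = (a+t+1)+1 by omega, Nat.factorial_succ]; ring
      have f4 : (Nat.factorial (t+1) : ℝ) = ((t:ℝ)+1) * (Nat.factorial t : ℝ) := by
        push_cast [Nat.factorial_succ]; ring
      have f5 : (Nat.factorial (a+1) : ℝ) = ((a:ℝ)+1) * (Nat.factorial a : ℝ) := by
        push_cast [Nat.factorial_succ]; ring
      rw [f1, f2, f3, f4, f5]
      have h1 : ((Nat.factorial a : ℝ)) ≠ 0 := Nat.cast_ne_zero.2 (Nat.factorial_ne_zero _)
      have h2 : ((Nat.factorial t : ℝ)) ≠ 0 := Nat.cast_ne_zero.2 (Nat.factorial_ne_zero _)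
      have h3 : ((Nat.factorial (a+t+1) : ℝ)) ≠ 0 := Nat.cast_ne_zero.2 (Nat.factorial_ne_zero _)
      have h4 : ((Nat.factorial (a+2*t+1) : ℝ)) ≠ 0 := Nat.cast_ne_zero.2 (Nat.factorial_ne_zero _)
      push_cast
      field_simp
      ring

lemma alt_sum (m : ℕ) :
    ∑ i ∈ Finset.range (m+1), (-1:ℝ)^i * (Nat.choose m i : ℝ) = if m = 0 then 1 else 0 := by
  rcases eq_or_ne m 0 with rfl | hm
  · simp
  · rw [if_neg hm]
    have h := Int.alternating_sum_range_choose_of_ne hm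
    have h2 : ((∑ i ∈ Finset.range (m+1), (-1:ℤ)^i * (Nat.choose m i : ℤ) : ℤ) : ℝ) = 0 := by
      rw [h]; simp
    push_cast at h2
    exact h2

lemma genStirling_one (σ : ℝ) (hσ : σ ≠ 0) (j : ℕ) :
    genStirling σ 1 j = if j = 1 then 1 else 0 := by
  cases j with
  | zero => simp [genStirling]
  | succ m =>
    unfold genStirling
    rw [sum_Icc_one]
    have key : ∀ i ∈ Finset.range (m+1),
        (-1:ℝ)^(i+1) * (Nat.choose (m+1) (i+1) : ℝ) * risingFactorial (-(((i+1:ℕ):ℝ) * σ)) 1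
          = σ * ((m:ℝ)+1) * ((-1:ℝ)^i * (Nat.choose m i : ℝ)) := by
      intro i hi
      rw [rF_one]
      have h := Nat.add_one_mul_choose_eq m i
      have h2 : ((m:ℝ)+1) * (Nat.choose m i : ℝ) = (Nat.choose (m+1) (i+1) : ℝ) * ((i:ℝ)+1) := by
        exact_mod_cast congrArg (fun z : ℕ => (z:ℝ)) h
      push_cast
      linear_combination (-(σ * (-1:ℝ)^i)) * h2
    rw [Finset.sum_congr rfl key, ← Finset.mul_sum, alt_sum]
    rcases eq_or_ne m 0 with rfl | hm
    · simp
      field_simp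
    · simp [hm]

lemma genStirling_half : ∀ k, 1 ≤ k → ∀ j, genStirling (1/2:ℝ) k j = Bfun k j := by
  intro k
  induction k with
  | zero => intro h; omega
  | succ n ih =>
    intro _ j
    rcases Nat.eq_zero_or_pos n with rfl | hn
    · rw [genStirling_one _ (by norm_num)]
      rcases eq_or_ne j 1 with rfl | hj
      · rw [if_pos rfl, Bfun, if_pos (by omega)]
        norm_num
      · rw [if_neg hj, Bfun, if_neg (by omega)]
    · cases j with
      | zero =>
        rw [Bfun, if_neg (by omega)]
        simp [genStirling]
      | succ m =>
        rw [genStirling_rec _ (by norm_num) n m hn, ih hn, ih hn, B_rec n m hn]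

lemma part1 (k j : ℕ) (hj : 1 ≤ j) (hjk : j ≤ k) :
    numBlocksPD (1/2) k j
      = (Nat.choose (2*k-j-1) (k-1) : ℝ) * (2:ℝ)^((j:ℤ)+1-2*(k:ℤ)) := by
  obtain ⟨m, rfl⟩ := Nat.exists_eq_add_of_le hj   -- j = 1 + m
  rcases k with _ | l
  · omega
  unfold numBlocksPD
  rw [genStirling_half _ (by omega), Bfun, if_pos ⟨by omega, hjk⟩]
  have g1 : Real.Gamma ((1+m : ℕ) : ℝ) = (Nat.factorial m : ℝ) := by
    rw [show ((1+m:ℕ):ℝ) = (m:ℝ)+1 from by push_cast; ring, Real.Gamma_nat_eq_factorial]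
  have g2 : Real.Gamma ((l+1 : ℕ) : ℝ) = (Nat.factorial l : ℝ) := by
    rw [show ((l+1:ℕ):ℝ) = (l:ℝ)+1 from by push_cast; ring, Real.Gamma_nat_eq_factorial]
  rw [g1, g2, show 1+m-1 = m from by omega, show l+1-1 = l from by omega]
  have hp : ((1:ℝ)/2)^m = (2:ℝ)^(-(m:ℤ)) := by
    rw [zpow_neg, zpow_natCast, one_div, inv_pow]
  have he : (2:ℝ)^(((1+m:ℕ):ℤ)+1-2*((l+1:ℕ):ℤ))
      = (2:ℝ)^(-(m:ℤ)) * (2:ℝ)^(2*((1+m:ℕ):ℤ) - 2*((l+1:ℕ):ℤ)) := by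
    rw [← zpow_add₀ (by norm_num : (2:ℝ) ≠ 0)]
    congr 1
    push_cast
    ring
  rw [hp, he]
  have h1 : ((Nat.factorial m : ℝ)) ≠ 0 := Nat.cast_ne_zero.2 (Nat.factorial_ne_zero _)
  have h2 : ((Nat.factorial l : ℝ)) ≠ 0 := Nat.cast_ne_zero.2 (Nat.factorial_ne_zero _)
  field_simp

noncomputable def W (k : ℕ) : ℝ := ∑ i ∈ Finset.range (k+1), (Nat.choose (k+i) i : ℝ) / 2^i

lemma W_succ (k : ℕ) : W (k+1) = 2 * W k := by
  have hsplit : W (k+1)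
      = ∑ i ∈ Finset.range (k+1), (Nat.choose (k+1+(i+1)) (i+1) : ℝ) / 2^(i+1) + 1 := by
    unfold W
    rw [Finset.sum_range_succ']
    norm_num
  have key : ∀ i ∈ Finset.range (k+1),
      (Nat.choose (k+1+(i+1)) (i+1) : ℝ) / 2^(i+1)
        = (Nat.choose (k+1+i) i : ℝ) / 2^i / 2 + (Nat.choose (k+(i+1)) (i+1) : ℝ) / 2^(i+1) := by
    intro i hi
    rw [show k+1+(i+1) = (k+1+i)+1 from by ring, Nat.choose_succ_succ,
        show k+1+i = k+(i+1) from by ring]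
    push_cast
    rw [pow_succ]
    ring
  rw [Finset.sum_congr rfl key, Finset.sum_add_distrib] at hsplit
  have h1 : ∑ i ∈ Finset.range (k+1), (Nat.choose (k+1+i) i : ℝ) / 2^i / 2
      = (W (k+1) - (Nat.choose (2*k+2) (k+1) : ℝ)/2^(k+1)) / 2 := by
    rw [← Finset.sum_div]
    congr 1
    have hW : W (k+1) = ∑ i ∈ Finset.range (k+1), (Nat.choose (k+1+i) i : ℝ) / 2^i
        + (Nat.choose (2*k+2) (k+1) : ℝ)/2^(k+1) := by
      unfold W
      rw [Finset.sum_range_succ, show k+1+(k+1) = 2*k+2 from by ring]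
    rw [hW]; ring
  have h2 : ∑ i ∈ Finset.range (k+1), (Nat.choose (k+(i+1)) (i+1) : ℝ) / 2^(i+1)
      = W k + (Nat.choose (2*k+1) (k+1) : ℝ)/2^(k+1) - 1 := by
    have e : ∑ i ∈ Finset.range (k+2), (Nat.choose (k+i) i : ℝ) / 2^i
        = ∑ i ∈ Finset.range (k+1), (Nat.choose (k+(i+1)) (i+1) : ℝ) / 2^(i+1) + 1 := by
      rw [Finset.sum_range_succ']
      norm_num
    have e2 : ∑ i ∈ Finset.range (k+2), (Nat.choose (k+i) i : ℝ) / 2^i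
        = W k + (Nat.choose (2*k+1) (k+1) : ℝ)/2^(k+1) := by
      unfold W
      rw [Finset.sum_range_succ, show k+(k+1) = 2*k+1 from by ring]
    rw [e2] at e
    linarith
  rw [h1, h2] at hsplit
  have hc : ((2*k+2).choose (k+1) : ℝ) = 2 * ((2*k+1).choose (k+1) : ℝ) := by
    have hn : (2*k+2).choose (k+1) = 2 * ((2*k+1).choose (k+1)) := by
      rw [show 2*k+2 = (2*k+1)+1 from by ring, Nat.choose_succ_succ, Nat.choose_symm_half]
      omega
    exact_mod_cast congrArg (fun z : ℕ => (z:ℝ)) hn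
  rw [hc, show (2 * (((2*k+1).choose (k+1) : ℕ) : ℝ)) / 2^(k+1)
      = 2 * ((((2*k+1).choose (k+1) : ℕ) : ℝ) / 2^(k+1)) from by ring] at hsplit
  linarith

lemma W_eq (k : ℕ) : W k = 2^k := by
  induction k with
  | zero => simp [W]
  | succ n ih => rw [W_succ, ih, pow_succ]; ring

lemma sum_part (k : ℕ) (hk : 1 ≤ k) :
    ∑ j ∈ Finset.Icc 1 k,
        (Nat.choose (2*k - j - 1) (k-1) : ℝ) * (2:ℝ)^((j:ℤ)+1-2*(k:ℤ)) = 1 := by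
  rcases k with _ | l
  · omega
  rw [sum_Icc_one, ← Finset.sum_range_reflect]
  have key : ∀ i ∈ Finset.range (l+1),
      (Nat.choose (2*(l+1) - ((l+1-1-i)+1) - 1) ((l+1)-1) : ℝ)
          * (2:ℝ)^((((l+1-1-i)+1 : ℕ):ℤ)+1-2*((l+1:ℕ):ℤ))
        = (2:ℝ)^(-(l:ℤ)) * ((Nat.choose (l+i) i : ℝ) / 2^i) := by
    intro i hi
    have hi' : i ≤ l := by simpa [Nat.lt_succ_iff] using Finset.mem_range.1 hi
    have n1 : 2*(l+1) - ((l+1-1-i)+1) - 1 = l + i := by omega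
    have n2 : (l+1) - 1 = l := by omega
    have n3 : ((((l+1-1-i)+1 : ℕ):ℤ)+1-2*((l+1:ℕ):ℤ)) = (-(l:ℤ)) - (i:ℕ) := by
      omega
    rw [n3, n1, n2, zpow_split]
    rw [show (l+i).choose l = (l+i).choose i from by
      simpa using Nat.choose_symm (Nat.le_add_left i l)]
    ring
  rw [Finset.sum_congr rfl key, ← Finset.mul_sum]
  have : ∑ i ∈ Finset.range (l+1), ((Nat.choose (l+i) i : ℝ) / 2^i) = W l := rfl
  rw [this, W_eq, zpow_neg, zpow_natCast]
  field_simp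


/-- For `β/α = 1/2`, the block-count distribution of a `PD(1/2,0)` partition
of `[k]` is `C(2k-j-1, k-1) 2^{j+1-2k}`, and these weights sum to `1`. -/
theorem PD_half_blocks (k : ℕ) (hk : 1 ≤ k) :
    (∀ j : ℕ, 1 ≤ j → j ≤ k →
        numBlocksPD (1 / 2) k j
          = (Nat.choose (2 * k - j - 1) (k - 1) : ℝ) *
            (2 : ℝ) ^ ((j : ℤ) + 1 - 2 * (k : ℤ))) ∧
    ∑ j ∈ Finset.Icc 1 k,
        (Nat.choose (2 * k - j - 1) (k - 1) : ℝ) *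
          (2 : ℝ) ^ ((j : ℤ) + 1 - 2 * (k : ℤ)) = 1 :=
  ⟨fun j hj hjk => part1 k j hj hjk, sum_part k hk⟩
end

section
/- For β ∈ (0,1) and positive integers n ≥ k ≥ 1, the n-th derivative of λ ↦ e^{-λ^β} satisfies (-1)^n (d^n/dλ^n) e^{-λ^β} = e^{-λ^β} ∑_{k=1}^{n} β^k S_β(n,k) λ^{kβ - n} for λ > 0, where S_β(n,k) = (1/(β^k k!)) ∑_{j=1}^k (-1)^j C(k,j)(-jβ)_n is the generalized Stirling number of the second kind. -/
open Finset

/-!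
Write `P_n(λ) = ∑ₖ β^k S_β(n,k) λ^{kβ-n}`. The product rule gives
`(e^{-λ^β} P_n)' = -e^{-λ^β} (β λ^{β-1} P_n - P_n')`, and the recurrence
`S_β(n+1,k) = S_β(n,k-1) + (n - kβ) S_β(n,k)` identifies `β λ^{β-1} P_n - P_n'` with `P_{n+1}`:
the two boundary terms vanish since `S_β(n,0) = 0` and `S_β(n,n+1) = 0` for `n ≥ 1`.
Induction on `n`, starting from `P_1 = β λ^{β-1}`, gives the formula. The recurrence itself comes
from `(x)_{n+1} = (x)_n (x + n)` together with `C(k+1,j) (k+1-j) = (k+1) C(k,j)`.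
-/

theorem Finset.sum_Icc_one_eq_sum_range {M : Type*} [AddCommMonoid M] (f : ℕ → M) (n : ℕ) :
    ∑ k ∈ Icc 1 n, f k = ∑ i ∈ range n, f (i + 1) := by
  rw [range_eq_Ico, sum_Ico_add' f 0 n 1, zero_add, Ico_add_one_right_eq_Icc]

theorem risingFactorial_succ (x : ℝ) (n : ℕ) :
    risingFactorial x (n + 1) = risingFactorial x n * (x + n) :=
  prod_range_succ _ _

theorem cast_choose_succ_mul_sub {k j : ℕ} (hj : j ≤ k + 1) :
    ((k + 1).choose j : ℝ) * ((k : ℝ) + 1 - j) = ((k : ℝ) + 1) * k.choose j := by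
  have h := congrArg (Nat.cast (R := ℝ)) (Nat.choose_mul_succ_eq k j)
  push_cast [Nat.cast_sub hj] at h
  linarith

section genStirling

variable {σ : ℝ}

theorem genStirling_zero_right (n : ℕ) : genStirling σ n 0 = 0 := by
  simp [genStirling]

theorem genStirling_one_one (hσ : σ ≠ 0) : genStirling σ 1 1 = 1 := by
  simp [genStirling, risingFactorial, hσ]

theorem sum_choose_succ_mul_risingFactorial_mul_sub (n k : ℕ) :
    ∑ j ∈ Icc 1 (k + 1), (-1 : ℝ) ^ j * ((k + 1).choose j : ℝ) *
        risingFactorial (-(j * σ)) n * (((k : ℝ) + 1) * σ - j * σ)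
      = σ * ((k : ℝ) + 1) *
          ∑ j ∈ Icc 1 k, (-1 : ℝ) ^ j * (k.choose j : ℝ) * risingFactorial (-(j * σ)) n := by
  calc _ = ∑ j ∈ Icc 1 (k + 1),
          σ * ((k : ℝ) + 1) * ((-1 : ℝ) ^ j * (k.choose j : ℝ) * risingFactorial (-(j * σ)) n) :=
        sum_congr rfl fun j hj => by
          linear_combination (-1 : ℝ) ^ j * risingFactorial (-(j * σ)) n * σ *
            cast_choose_succ_mul_sub (mem_Icc.mp hj).2
    _ = _ := by
      rw [← mul_sum, sum_Icc_succ_top (by omega), Nat.choose_succ_self, Nat.cast_zero, mul_zero,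
        zero_mul, add_zero]

theorem genStirling_succ_succ (hσ : σ ≠ 0) (n k : ℕ) :
    genStirling σ (n + 1) (k + 1)
      = genStirling σ n k + ((n : ℝ) - ((k : ℝ) + 1) * σ) * genStirling σ n (k + 1) := by
  have numerator : ∑ j ∈ Icc 1 (k + 1), (-1 : ℝ) ^ j * ((k + 1).choose j : ℝ) *
        risingFactorial (-(j * σ)) (n + 1)
      = σ * ((k : ℝ) + 1) *
          ∑ j ∈ Icc 1 k, (-1 : ℝ) ^ j * (k.choose j : ℝ) * risingFactorial (-(j * σ)) n
        + ((n : ℝ) - ((k : ℝ) + 1) * σ) * ∑ j ∈ Icc 1 (k + 1), (-1 : ℝ) ^ j *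
          ((k + 1).choose j : ℝ) * risingFactorial (-(j * σ)) n := by
    rw [← sum_choose_succ_mul_risingFactorial_mul_sub, mul_sum, ← sum_add_distrib]
    refine sum_congr rfl fun j _ => ?_
    rw [risingFactorial_succ]
    ring
  rw [genStirling, genStirling, genStirling, numerator, Nat.factorial_succ]
  push_cast
  field_simp
  ring

-- `(-jσ)_1 = -jσ` and `j C(k,j) = k C(k-1,j-1)` leave an alternating binomial sum.
theorem genStirling_one_eq_zero {k : ℕ} (hk : 2 ≤ k) : genStirling σ 1 k = 0 := by
  obtain ⟨r, rfl⟩ : ∃ r, k = r + 1 + 1 := ⟨k - 2, by omega⟩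
  have numerator : ∑ j ∈ Icc 1 (r + 1 + 1), (-1 : ℝ) ^ j * ((r + 1 + 1).choose j : ℝ) *
        risingFactorial (-(j * σ)) 1
      = σ * ((r : ℝ) + 1 + 1) * ∑ i ∈ range (r + 1 + 1), (-1 : ℝ) ^ i * ((r + 1).choose i : ℝ) := by
    rw [sum_Icc_one_eq_sum_range, mul_sum]
    refine sum_congr rfl fun i _ => ?_
    have h := congrArg (Nat.cast (R := ℝ)) (Nat.add_one_mul_choose_eq (r + 1) i)
    push_cast at h
    simp only [risingFactorial, prod_range_one, Nat.cast_zero, add_zero]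
    push_cast
    linear_combination -(-1 : ℝ) ^ i * σ * h
  have alternating : ∑ i ∈ range (r + 1 + 1), (-1 : ℝ) ^ i * ((r + 1).choose i : ℝ) = 0 := by
    exact_mod_cast Int.alternating_sum_range_choose_of_ne (Nat.succ_ne_zero r)
  rw [genStirling, numerator, alternating, mul_zero, mul_zero]

theorem genStirling_eq_zero_of_lt (hσ : σ ≠ 0) {n k : ℕ} (hn : 1 ≤ n) (hk : n < k) :
    genStirling σ n k = 0 := by
  induction n, hn using Nat.le_induction generalizing k with
  | base => exact genStirling_one_eq_zero hk
  | succ n hn ih =>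
    obtain ⟨k, rfl⟩ : ∃ j, k = j + 1 := ⟨k - 1, by omega⟩
    rw [genStirling_succ_succ hσ, ih (by omega), ih (by omega), mul_zero, add_zero]

end genStirling

noncomputable def stableLaplaceSum (β : ℝ) (n : ℕ) (x : ℝ) : ℝ :=
  ∑ k ∈ Icc 1 n, β ^ k * genStirling β n k * x ^ ((k : ℝ) * β - n)

section stableLaplaceSum

variable {β l : ℝ}

theorem hasDerivAt_stableLaplaceSum (hl : 0 < l) (n : ℕ) :
    HasDerivAt (stableLaplaceSum β n)
      (∑ k ∈ Icc 1 n, β ^ k * genStirling β n k * (((k : ℝ) * β - n) * l ^ ((k : ℝ) * β - n - 1)))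
      l := by
  refine HasDerivAt.fun_sum fun k _ => ?_
  exact (Real.hasDerivAt_rpow_const (Or.inl hl.ne')).const_mul _

theorem stableLaplaceSum_succ (hβ : β ≠ 0) (hl : 0 < l) {n : ℕ} (hn : 1 ≤ n) :
    stableLaplaceSum β (n + 1) l
      = β * l ^ (β - 1) * stableLaplaceSum β n l
        - ∑ k ∈ Icc 1 n,
            β ^ k * genStirling β n k * (((k : ℝ) * β - n) * l ^ ((k : ℝ) * β - n - 1)) := by
  set c : ℕ → ℝ := fun k => β ^ k * genStirling β n k * l ^ ((k : ℝ) * β - n)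
  set d : ℕ → ℝ := fun k =>
    β ^ k * genStirling β n k * (((k : ℝ) * β - n) * l ^ ((k : ℝ) * β - n - 1))
  have term (k : ℕ) : β ^ (k + 1) * genStirling β (n + 1) (k + 1) *
      l ^ (((k + 1 : ℕ) : ℝ) * β - (n + 1 : ℕ)) = β * l ^ (β - 1) * c k - d (k + 1) := by
    have exponent :
        l ^ (β - 1) * l ^ ((k : ℝ) * β - n) = l ^ (((k : ℝ) + 1) * β - ((n : ℝ) + 1)) := by
      rw [← Real.rpow_add hl]; ring_nf
    have exponent' :
        l ^ (((k : ℝ) + 1) * β - n - 1) = l ^ (((k : ℝ) + 1) * β - ((n : ℝ) + 1)) := by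
      ring_nf
    simp only [c, d, genStirling_succ_succ hβ]
    push_cast
    rw [exponent', ← exponent]
    ring
  calc stableLaplaceSum β (n + 1) l
      = ∑ k ∈ range (n + 1), (β * l ^ (β - 1) * c k - d (k + 1)) := by
        rw [stableLaplaceSum, sum_Icc_one_eq_sum_range]
        exact sum_congr rfl fun k _ => term k
    _ = β * l ^ (β - 1) * ∑ k ∈ range (n + 1), c k - ∑ k ∈ Icc 1 (n + 1), d k := by
        rw [sum_sub_distrib, mul_sum, sum_Icc_one_eq_sum_range]
    _ = _ := by
        rw [sum_range_succ', sum_Icc_succ_top (by omega), stableLaplaceSum,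
          sum_Icc_one_eq_sum_range c n]
        simp [c, d, genStirling_zero_right, genStirling_eq_zero_of_lt hβ hn (Nat.lt_succ_self n)]

theorem hasDerivAt_exp_neg_rpow (hl : 0 < l) :
    HasDerivAt (fun x : ℝ => Real.exp (-(x ^ β)))
      (-(Real.exp (-(l ^ β)) * (β * l ^ (β - 1)))) l := by
  simpa using ((Real.hasDerivAt_rpow_const (p := β) (Or.inl hl.ne')).neg.exp)

theorem hasDerivAt_exp_neg_rpow_mul_stableLaplaceSum (hβ : β ≠ 0) (hl : 0 < l)
    {n : ℕ} (hn : 1 ≤ n) :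
    HasDerivAt (fun x : ℝ => Real.exp (-(x ^ β)) * stableLaplaceSum β n x)
      (-(Real.exp (-(l ^ β)) * stableLaplaceSum β (n + 1) l)) l := by
  refine ((hasDerivAt_exp_neg_rpow hl).mul (hasDerivAt_stableLaplaceSum hl n)).congr_deriv ?_
  rw [stableLaplaceSum_succ hβ hl hn]
  ring

end stableLaplaceSum

theorem iteratedDeriv_exp_neg_rpow {β : ℝ} (hβ : β ≠ 0) {n : ℕ} (hn : 1 ≤ n) :
    Set.EqOn (iteratedDeriv n fun x : ℝ => Real.exp (-(x ^ β)))
      (fun x => (-1) ^ n * (Real.exp (-(x ^ β)) * stableLaplaceSum β n x)) (Set.Ioi 0) := by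
  induction n, hn using Nat.le_induction with
  | base =>
    intro l hl
    rw [iteratedDeriv_one, (hasDerivAt_exp_neg_rpow hl).deriv]
    simp [stableLaplaceSum, genStirling_one_one hβ]
  | succ n hn ih =>
    intro l hl
    have eventuallyEq := Filter.eventuallyEq_of_mem (isOpen_Ioi.mem_nhds hl) ih
    rw [iteratedDeriv_succ, eventuallyEq.deriv_eq,
      ((hasDerivAt_exp_neg_rpow_mul_stableLaplaceSum hβ hl hn).const_mul _).deriv, pow_succ]
    ring

theorem iteratedDeriv_stable_laplace_general (β : ℝ) (hβ0 : 0 < β)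
    (n : ℕ) (hn : 1 ≤ n) :
    ∀ l : ℝ, 0 < l →
      (-1 : ℝ) ^ n * iteratedDeriv n (fun x : ℝ => Real.exp (-(x ^ β))) l
        = Real.exp (-(l ^ β)) *
            ∑ k ∈ Finset.Icc 1 n, β ^ k * genStirling β n k * l ^ ((k : ℝ) * β - n) := by
  intro l hl
  rw [iteratedDeriv_exp_neg_rpow hβ0.ne' hn hl, ← mul_assoc, ← mul_pow, neg_one_mul, neg_neg,
    one_pow, one_mul, stableLaplaceSum]

/-- Derivatives of the stable Laplace exponent:
`(-1)^n (d^n/dλ^n) e^{-λ^β} = e^{-λ^β} ∑_{k=1}^n β^k S_β(n,k) λ^{kβ-n}` for `λ > 0`. -/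
theorem iteratedDeriv_stable_laplace (β : ℝ) (hβ0 : 0 < β) (hβ1 : β < 1)
    (n : ℕ) (hn : 1 ≤ n) :
    ∀ l : ℝ, 0 < l →
      (-1 : ℝ) ^ n * iteratedDeriv n (fun x : ℝ => Real.exp (-(x ^ β))) l
        = Real.exp (-(l ^ β)) *
            ∑ k ∈ Finset.Icc 1 n, β ^ k * genStirling β n k * l ^ ((k : ℝ) * β - n) :=
  iteratedDeriv_stable_laplace_general β hβ0 n hn
end
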